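/- arXiv:math/0105225 — 2 statements merged into one kernel-verified Lean document; each statement's English description precedes it below -/
import Mathlib

section
/- Let $I_\ell \subset U\mathfrak{g}$ be the left ideal generated by $\{x - \chi(x) : x \in \mathfrak{a}\}$. Then $I_\ell$ is stable under the adjoint action of $\mathfrak{n}_\ell$ on $U\mathfrak{g}$ (extending $\operatorname{ad}$ by derivations). -/
open UniversalEnvelopingAlgebra

/-- Let `I_ℓ ⊆ U𝔤` be the left ideal generated by `x - χ(x)`, `x ∈ 𝔞`.
Then `I_ℓ` is stable under the adjoint action `u ↦ nu - un` of every `n ∈ 𝔫_ℓ`. -/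
theorem ideal_stable_under_ad_n
    {L : Type*} [LieRing L] [LieAlgebra ℂ L] [FiniteDimensional ℂ L]
    [LieAlgebra.IsSemisimple ℂ L]
    (e h f : L) (hT : IsSl2Triple h e f)
    (ℓ : Submodule ℂ L)
    (hℓV : ℓ ≤ Module.End.eigenspace (LieAlgebra.ad ℂ L h) (-1 : ℂ))
    (hiso : ∀ x ∈ ℓ, ∀ y ∈ ℓ, killingForm ℂ L e ⁅x, y⁆ = 0)
    (ℓperp : Submodule ℂ L)
    (hperp : ∀ x, x ∈ ℓperp ↔
        x ∈ Module.End.eigenspace (LieAlgebra.ad ℂ L h) (-1 : ℂ) ∧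
          ∀ y ∈ ℓ, killingForm ℂ L e ⁅x, y⁆ = 0)
    (𝔞 𝔫 : Submodule ℂ L)
    (h𝔞 : 𝔞 = ℓ ⊔ ⨆ i : {i : ℤ // i ≤ -2},
        Module.End.eigenspace (LieAlgebra.ad ℂ L h) ((i : ℤ) : ℂ))
    (h𝔫 : 𝔫 = ℓperp ⊔ ⨆ i : {i : ℤ // i ≤ -2},
        Module.End.eigenspace (LieAlgebra.ad ℂ L h) ((i : ℤ) : ℂ))
    (I : Ideal (UniversalEnvelopingAlgebra ℂ L))
    (hI : I = Ideal.span {u | ∃ x ∈ 𝔞,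
        u = ι ℂ x - algebraMap ℂ (UniversalEnvelopingAlgebra ℂ L) (killingForm ℂ L e x)}) :
    ∀ n ∈ 𝔫, ∀ u ∈ I, ι ℂ n * u - u * ι ℂ n ∈ I := by
  classical
  set eig : ℂ → Submodule ℂ L := fun μ => Module.End.eigenspace (LieAlgebra.ad ℂ L h) μ with heig
  -- the Killing form `κ(e, ·)` vanishes on eigenspaces of eigenvalue `≠ -2`
  have hχ : ∀ (μ : ℂ), μ ≠ -2 → ∀ z ∈ eig μ, killingForm ℂ L e z = 0 := by
    intro μ hμ z hz
    rw [heig, Module.End.mem_eigenspace_iff, LieAlgebra.ad_apply] at hz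
    have h1 : killingForm ℂ L ⁅h, z⁆ e = - killingForm ℂ L z ⁅h, e⁆ :=
      LieModule.traceForm_apply_lie_apply' ℂ L L h z e
    rw [hz, hT.lie_h_e_nsmul] at h1
    have h2 : μ * killingForm ℂ L z e = - (2 * killingForm ℂ L z e) := by
      simpa [Nat.cast_smul_eq_nsmul ℂ, smul_eq_mul] using h1
    have h3 : (μ + 2) * killingForm ℂ L z e = 0 := by linear_combination h2
    have h4 : killingForm ℂ L z e = 0 := by
      rcases mul_eq_zero.mp h3 with h5 | h5
      · exact absurd (by linear_combination h5) hμ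
      · exact h5
    rw [LieModule.traceForm_comm] at h4
    exact h4
  -- brackets of eigenvectors
  have hbr : ∀ (a b : ℂ) (x y : L), x ∈ eig a → y ∈ eig b → ⁅x, y⁆ ∈ eig (a + b) := by
    intro a b x y hx hy
    rw [heig, Module.End.mem_eigenspace_iff, LieAlgebra.ad_apply] at hx hy ⊢
    rw [leibniz_lie, hx, hy, smul_lie, lie_smul, add_smul]
  set S : Submodule ℂ L := ⨆ i : {i : ℤ // i ≤ -2}, eig ((i : ℤ) : ℂ) with hS
  have hgS : ∀ k : ℤ, k ≤ -2 → eig ((k : ℤ) : ℂ) ≤ S := by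
    intro k hk
    exact le_iSup (fun i : {i : ℤ // i ≤ -2} => eig ((i : ℤ) : ℂ)) ⟨k, hk⟩
  set W : Submodule ℂ L := S ⊓ LinearMap.ker (killingForm ℂ L e) with hW
  have hmemW : ∀ (k : ℤ), k ≤ -3 → ∀ z ∈ eig ((k : ℤ) : ℂ), z ∈ W := by
    intro k hk z hz
    refine ⟨hgS k (by omega) hz, ?_⟩
    have : ((k : ℤ) : ℂ) ≠ -2 := by
      intro hc
      have : (k : ℤ) = -2 := by exact_mod_cast hc
      omega
    exact hχ _ this z hz
  -- bracket of a `(-1)`-eigenvector with an element of `S` lands in `W`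
  have hW1 : ∀ w ∈ eig (-1 : ℂ), ∀ z ∈ S, ⁅w, z⁆ ∈ W := by
    intro w hw z hz
    refine Submodule.iSup_induction (motive := fun z => ⁅w, z⁆ ∈ W) _ hz ?_ (by simp) ?_
    · rintro ⟨i, hi⟩ z hzi
      have hb : ⁅w, z⁆ ∈ eig ((-1 : ℂ) + (i : ℂ)) := hbr _ _ _ _ hw hzi
      have : ((-1 : ℂ) + (i : ℂ)) = (((-1 + i : ℤ) : ℤ) : ℂ) := by push_cast; ring
      rw [this] at hb
      exact hmemW (-1 + i) (by omega) _ hb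
    · intro x y hx hy
      rw [lie_add]; exact W.add_mem hx hy
  -- bracket of two elements of `S` lands in `W`
  have hW2 : ∀ z ∈ S, ∀ w ∈ S, ⁅z, w⁆ ∈ W := by
    intro z hz
    refine Submodule.iSup_induction (motive := fun z => ∀ w ∈ S, ⁅z, w⁆ ∈ W) _ hz ?_ (by simp) ?_
    · rintro ⟨i, hi⟩ z hzi w hw
      refine Submodule.iSup_induction (motive := fun w => ⁅z, w⁆ ∈ W) _ hw ?_ (by simp) ?_
      · rintro ⟨j, hj⟩ w hwj
        have hb : ⁅z, w⁆ ∈ eig ((i : ℂ) + (j : ℂ)) := hbr _ _ _ _ hzi hwj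
        have : ((i : ℂ) + (j : ℂ)) = (((i + j : ℤ) : ℤ) : ℂ) := by push_cast; ring
        rw [this] at hb
        exact hmemW (i + j) (by omega) _ hb
      · intro x y hx hy
        rw [lie_add]; exact W.add_mem hx hy
    · intro x y hx hy w hw
      rw [add_lie]; exact W.add_mem (hx w hw) (hy w hw)
  -- main Lie-theoretic fact : `⁅𝔫, 𝔞⁆ ⊆ W`
  have hkey : ∀ n ∈ 𝔫, ∀ x ∈ 𝔞, ⁅n, x⁆ ∈ W := by
    intro n hn x hx
    rw [h𝔫] at hn
    rw [h𝔞] at hx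
    obtain ⟨n1, hn1, n2, hn2, rfl⟩ := Submodule.mem_sup.mp hn
    obtain ⟨x1, hx1, x2, hx2, rfl⟩ := Submodule.mem_sup.mp hx
    have e1 : ⁅n1 + n2, x1 + x2⁆ = ⁅n1, x1⁆ + ⁅n1, x2⁆ + (⁅n2, x1⁆ + ⁅n2, x2⁆) := by
      rw [add_lie, lie_add, lie_add]
    rw [e1]
    have hn1e : n1 ∈ eig (-1 : ℂ) := ((hperp n1).mp hn1).1
    have hx1e : x1 ∈ eig (-1 : ℂ) := hℓV hx1
    refine W.add_mem (W.add_mem ?_ (hW1 n1 hn1e x2 hx2))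
      (W.add_mem ?_ (hW2 n2 hn2 x2 hx2))
    · -- ⁅ℓperp, ℓ⁆ ⊆ W
      have hb : ⁅n1, x1⁆ ∈ eig ((-1 : ℂ) + (-1 : ℂ)) := hbr _ _ _ _ hn1e hx1e
      have hc : ((-1 : ℂ) + (-1 : ℂ)) = (((-2 : ℤ) : ℤ) : ℂ) := by push_cast; ring
      rw [hc] at hb
      exact ⟨hgS (-2) le_rfl hb, ((hperp n1).mp hn1).2 x1 hx1⟩
    · -- ⁅S, ℓ⁆ ⊆ W
      have := hW1 x1 hx1e n2 hn2
      have e2 : ⁅n2, x1⁆ = -⁅x1, n2⁆ := (lie_skew n2 x1).symm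
      rw [e2]
      exact W.neg_mem this
  have hS𝔞 : S ≤ 𝔞 := by rw [h𝔞]; exact le_sup_right
  -- now the enveloping-algebra part
  subst hI
  intro n hn u hu
  refine Submodule.span_induction
    (p := fun u _ => ι ℂ n * u - u * ι ℂ n ∈ Ideal.span {u | ∃ x ∈ 𝔞,
      u = ι ℂ x - algebraMap ℂ (UniversalEnvelopingAlgebra ℂ L) (killingForm ℂ L e x)})
    ?_ ?_ ?_ ?_ hu
  · rintro g ⟨x, hx, rfl⟩
    have hcomm : ∀ c : ℂ, ∀ v : UniversalEnvelopingAlgebra ℂ L,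
        algebraMap ℂ _ c * v = v * algebraMap ℂ _ c := fun c v => (Algebra.commutes c v)
    have e3 : ι ℂ n * (ι ℂ x - algebraMap ℂ _ (killingForm ℂ L e x)) -
        (ι ℂ x - algebraMap ℂ _ (killingForm ℂ L e x)) * ι ℂ n
        = ι ℂ n * ι ℂ x - ι ℂ x * ι ℂ n := by
      rw [mul_sub, sub_mul, hcomm (killingForm ℂ L e x) (ι ℂ n)]
      abel
    rw [e3]
    have e4 : ι ℂ n * ι ℂ x - ι ℂ x * ι ℂ n = ι ℂ ⁅n, x⁆ := by
      letI := LieRing.ofAssociativeRing (A := UniversalEnvelopingAlgebra ℂ L)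
      rw [LieHom.map_lie, Ring.lie_def]
    rw [e4]
    obtain ⟨hmem, hker⟩ := hkey n hn x hx
    have hker' : killingForm ℂ L e ⁅n, x⁆ = 0 := hker
    refine Ideal.subset_span ⟨⁅n, x⁆, hS𝔞 hmem, ?_⟩
    rw [hker', map_zero, sub_zero]
  · simp
  · intro x y hx hy px py
    have e5 : ι ℂ n * (x + y) - (x + y) * ι ℂ n
        = (ι ℂ n * x - x * ι ℂ n) + (ι ℂ n * y - y * ι ℂ n) := by noncomm_ring
    rw [e5]
    exact Ideal.add_mem _ px py
  · intro a x hx px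
    have e6 : ι ℂ n * (a • x) - (a • x) * ι ℂ n
        = (ι ℂ n * a - a * ι ℂ n) * x + a * (ι ℂ n * x - x * ι ℂ n) := by
      rw [smul_eq_mul]; noncomm_ring
    rw [e6]
    exact Ideal.add_mem _ (Ideal.mul_mem_left _ _ hx) (Ideal.mul_mem_left _ _ px)
end

section
/- The Slodowy slice $e + \operatorname{Ker}(\operatorname{ad} f)$ intersects every $\operatorname{Ad} G$-orbit in $\mathfrak{g}$ transversally: for every $x \in e + \operatorname{Ker}(\operatorname{ad} f)$, one has $\mathfrak{g} = [\mathfrak{g}, x] + \operatorname{Ker}(\operatorname{ad} f)$. -/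
set_option linter.unusedSectionVars false

open Module LieAlgebra

attribute [local instance 100] LieRing.ofAssociativeRing

namespace SlodowyTransversal

variable {L : Type*} [LieRing L] [LieAlgebra ℂ L] [FiniteDimensional ℂ L]

/-! ### Generic linear algebra helpers -/

lemma exists_eigvec {p : Submodule ℂ L} (hp : p ≠ ⊥) {g : Module.End ℂ L} {μ : ℂ}
    (hmap : ∀ z ∈ p, g z ∈ p) (hle : p ≤ g.maxGenEigenspace μ) :
    ∃ w ∈ p, w ≠ 0 ∧ g w = μ • w := by
  obtain ⟨K, hK⟩ : ∃ K : ℕ, ∀ z ∈ p, ((g - μ • 1) ^ K) z = 0 := by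
    refine ⟨Module.End.maxUnifEigenspaceIndex g μ, fun z hz => ?_⟩
    have h1 := hle hz
    rw [Module.End.maxGenEigenspace, Module.End.genEigenspace_top_eq_maxUnifEigenspaceIndex,
      Module.End.mem_genEigenspace_nat, LinearMap.mem_ker] at h1
    exact h1
  obtain ⟨z₀, hz₀, hz₀0⟩ := (Submodule.ne_bot_iff _).mp hp
  obtain ⟨j, hj1, hj2⟩ := Nat.exists_not_and_succ_of_not_zero_of_exists
    (p := fun j => ((g - μ • 1) ^ j) z₀ = 0)
    (by simpa using hz₀0) ⟨K, hK z₀ hz₀⟩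
  refine ⟨((g - μ • 1) ^ j) z₀, Module.End.pow_apply_mem_of_forall_mem j
    (fun z hz => by simpa using p.sub_mem (hmap z hz) (p.smul_mem μ hz)) z₀ hz₀, hj1, ?_⟩
  have h0 : ((g - μ • 1) ^ (j+1)) z₀ = 0 := hj2
  rw [pow_succ', Module.End.mul_apply, LinearMap.sub_apply, LinearMap.smul_apply,
    Module.End.one_apply, sub_eq_zero] at h0
  exact h0

lemma dim_lt {g : Module.End ℂ L} {S T : Set ℂ} {l₀ : ℂ} (hST : S ⊆ T) (hlT : l₀ ∈ T)
    (hlS : l₀ ∉ S) (hne : g.maxGenEigenspace l₀ ≠ ⊥) :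
    finrank ℂ ↥(⨆ l ∈ S, g.maxGenEigenspace l) <
      finrank ℂ ↥(⨆ l ∈ T, g.maxGenEigenspace l) := by
  apply Submodule.finrank_lt_finrank_of_lt
  refine lt_of_le_of_ne (biSup_mono fun l hl => hST hl) fun heq => ?_
  have h1 : g.maxGenEigenspace l₀ ≤ ⨆ l ∈ S, g.maxGenEigenspace l :=
    heq ▸ le_biSup _ hlT
  have h2 : Disjoint (g.maxGenEigenspace l₀) (⨆ l ∈ S, g.maxGenEigenspace l) :=
    (Module.End.independent_maxGenEigenspace g).disjoint_biSup hlS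
  exact hne (le_bot_iff.mp (h2 le_rfl h1))

/-- Dimension of the sum of generalized eigenspaces with real part below `μ.re`. -/
noncomputable def lowDim (h : L) (μ : ℂ) : ℕ :=
  finrank ℂ ↥(⨆ l ∈ {l : ℂ | l.re < μ.re}, (ad ℂ L h).maxGenEigenspace l)

/-- Dimension of the sum of generalized eigenspaces with real part above `μ.re`. -/
noncomputable def highDim (h : L) (μ : ℂ) : ℕ :=
  finrank ℂ ↥(⨆ l ∈ {l : ℂ | μ.re < l.re}, (ad ℂ L h).maxGenEigenspace l)

lemma lowDim_lt (h : L) {l₀ μ : ℂ} (hne : (ad ℂ L h).maxGenEigenspace l₀ ≠ ⊥)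
    (hlt : l₀.re < μ.re) : lowDim h l₀ < lowDim h μ :=
  dim_lt (fun l (hl : l.re < l₀.re) => lt_trans hl hlt) hlt
    (fun hc => lt_irrefl _ (Set.mem_setOf_eq ▸ hc)) hne

lemma highDim_lt (h : L) {l₀ μ : ℂ} (hne : (ad ℂ L h).maxGenEigenspace l₀ ≠ ⊥)
    (hlt : μ.re < l₀.re) : highDim h l₀ < highDim h μ :=
  dim_lt (fun l (hl : l₀.re < l.re) => lt_trans hlt hl) hlt
    (fun hc => lt_irrefl _ (Set.mem_setOf_eq ▸ hc)) hne

lemma pointwise_nilp {U : Submodule ℂ L} {X Y : Module.End ℂ L} (hc : Commute X Y)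
    (hYU : ∀ z ∈ U, Y z ∈ U) {kX kY : ℕ}
    (hX : ∀ z ∈ U, (X ^ kX) z = 0) (hY : ∀ z ∈ U, (Y ^ kY) z = 0) :
    ∀ z ∈ U, ((X - Y) ^ (kX + kY)) z = 0 := by
  intro z hz
  rw [sub_eq_add_neg, (hc.neg_right).add_pow]
  rw [LinearMap.coe_sum, Finset.sum_apply]
  apply Finset.sum_eq_zero
  intro m hm
  rw [Finset.mem_range] at hm
  rcases le_or_gt kY (kX + kY - m) with hcase | hcase
  · have hYz : ((-Y) ^ (kX + kY - m)) z = 0 := by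
      have h0 : (Y ^ (kX + kY - m)) z = 0 := by
        rw [show kX + kY - m = (kX + kY - m - kY) + kY by omega, pow_add,
          Module.End.mul_apply, hY z hz, map_zero]
      rw [neg_pow]
      simp [h0]
    simp [Module.End.mul_apply, hYz]
  · have hmem : ((-Y) ^ (kX + kY - m)) z ∈ U := by
      apply Module.End.pow_apply_mem_of_forall_mem _ (fun u hu => ?_) _ hz
      simpa using U.neg_mem (hYU u hu)
    have hXz : (X ^ m) (((-Y) ^ (kX + kY - m)) z) = 0 := by
      have hsplit : X ^ m = X ^ (m - kX) * X ^ kX := by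
        rw [← pow_add]
        congr 1
        omega
      rw [hsplit, Module.End.mul_apply, hX _ hmem, map_zero]
    simp [Module.End.mul_apply, hXz]

lemma surj_of_nilp {U : Submodule ℂ L} {P N : Module.End ℂ L} {a : ℂ} (ha : a ≠ 0)
    (hPN : ∀ z, P z = a • z + N z) (hNU : ∀ z ∈ U, N z ∈ U) :
    ∀ (j : ℕ), ∀ z ∈ U, (N ^ j) z = 0 → ∃ u ∈ U, P u = z := by
  intro j
  induction j with
  | zero =>
    intro z hz h0
    rw [pow_zero, Module.End.one_apply] at h0
    exact ⟨0, U.zero_mem, by simp [hPN, h0]⟩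
  | succ j ih =>
    intro z hz hj
    have h1 : (N ^ j) (N z) = 0 := by
      rw [← Module.End.mul_apply, ← pow_succ]; exact hj
    obtain ⟨u', hu', hPu'⟩ := ih (N z) (hNU z hz) h1
    refine ⟨a⁻¹ • (z - u'), U.smul_mem _ (U.sub_mem hz hu'), ?_⟩
    rw [map_smul, map_sub, hPN z, hPu', add_sub_cancel_right, smul_smul,
      inv_mul_cancel₀ ha, one_smul]

/-! ### The sl2-triple setup -/

variable {e h f : L}

/-- Twice the Casimir operator of the `sl₂`-triple, in the adjoint representation. -/
noncomputable def Cas (e h f : L) : Module.End ℂ L :=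
  ad ℂ L e * ad ℂ L f + ad ℂ L e * ad ℂ L f + ad ℂ L f * ad ℂ L e + ad ℂ L f * ad ℂ L e
    + ad ℂ L h * ad ℂ L h

lemma Cas_def (e h f : L) : Cas e h f =
    ad ℂ L e * ad ℂ L f + ad ℂ L e * ad ℂ L f + ad ℂ L f * ad ℂ L e + ad ℂ L f * ad ℂ L e
    + ad ℂ L h * ad ℂ L h := rfl

lemma lieMulEnd (x y z : Module.End ℂ L) : ⁅x, y*z⁆ = ⁅x,y⁆*z + y*⁅x,z⁆ := by
  simp only [Ring.lie_def]; noncomm_ring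

section Triple

variable (hT : IsSl2Triple h e f)
include hT

lemma lieAB : ⁅ad ℂ L e, ad ℂ L f⁆ = ad ℂ L h := by
  rw [← LieHom.map_lie, hT.lie_e_f]

lemma lieHA : ⁅ad ℂ L h, ad ℂ L e⁆ = ad ℂ L e + ad ℂ L e := by
  rw [← LieHom.map_lie, hT.lie_h_e_nsmul, two_smul ℕ e, map_add]

lemma lieHB : ⁅ad ℂ L h, ad ℂ L f⁆ = -(ad ℂ L f + ad ℂ L f) := by
  rw [← LieHom.map_lie, hT.lie_h_f_nsmul, two_smul ℕ f, map_neg, map_add]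

lemma commHC : Commute (ad ℂ L h) (Cas e h f) := by
  have key : ⁅ad ℂ L h, Cas e h f⁆ = 0 := by
    simp only [Cas_def, lie_add, lieMulEnd]
    rw [lieHA hT, lieHB hT, lie_self]
    noncomm_ring
  rw [Ring.lie_def, sub_eq_zero] at key
  exact key

lemma commCA : Commute (Cas e h f) (ad ℂ L e) := by
  have key : ⁅ad ℂ L e, Cas e h f⁆ = 0 := by
    have hAH : ⁅ad ℂ L e, ad ℂ L h⁆ = -(ad ℂ L e + ad ℂ L e) := by
      rw [← lie_skew, lieHA hT]
    simp only [Cas_def, lie_add, lieMulEnd]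
    rw [lieAB hT, hAH, lie_self]
    noncomm_ring
  rw [Ring.lie_def, sub_eq_zero] at key
  exact key.symm

lemma commCB : Commute (Cas e h f) (ad ℂ L f) := by
  have key : ⁅ad ℂ L f, Cas e h f⁆ = 0 := by
    have hBA : ⁅ad ℂ L f, ad ℂ L e⁆ = -(ad ℂ L h) := by
      rw [← lie_skew, lieAB hT]
    have hBH : ⁅ad ℂ L f, ad ℂ L h⁆ = ad ℂ L f + ad ℂ L f := by
      rw [← lie_skew, lieHB hT, neg_neg]
    simp only [Cas_def, lie_add, lieMulEnd]
    rw [hBA, hBH, lie_self]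
    noncomm_ring
  rw [Ring.lie_def, sub_eq_zero] at key
  exact key.symm

lemma fourAB : ad ℂ L e * ad ℂ L f + ad ℂ L e * ad ℂ L f + ad ℂ L e * ad ℂ L f
    + ad ℂ L e * ad ℂ L f =
    Cas e h f - ad ℂ L h * ad ℂ L h + ad ℂ L h + ad ℂ L h := by
  have hba : ad ℂ L f * ad ℂ L e = ad ℂ L e * ad ℂ L f - ad ℂ L h := by
    have h1 := lieAB hT
    rw [Ring.lie_def] at h1
    rw [← h1]; noncomm_ring
  rw [Cas_def, hba]; noncomm_ring

lemma e_mem : e ∈ (ad ℂ L h).maxGenEigenspace 2 := by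
  rw [Module.End.mem_maxGenEigenspace]
  refine ⟨1, ?_⟩
  have h1 : ⁅h, e⁆ = (2:ℂ) • e := hT.lie_h_e_smul ℂ
  simp [h1]

lemma f_mem : f ∈ (ad ℂ L h).maxGenEigenspace (-2) := by
  rw [Module.End.mem_maxGenEigenspace]
  refine ⟨1, ?_⟩
  have h1 : ⁅h, f⁆ = -((2:ℂ) • f) := hT.lie_lie_smul_f ℂ
  simp [h1]

lemma mapsA {μ : ℂ} {z : L} (hz : z ∈ (ad ℂ L h).maxGenEigenspace μ) :
    ad ℂ L e z ∈ (ad ℂ L h).maxGenEigenspace (μ + 2) := by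
  have h1 := LieModule.lie_mem_maxGenEigenspace_toEnd (e_mem hT) hz
  rw [add_comm] at h1
  exact h1

lemma mapsB {μ : ℂ} {z : L} (hz : z ∈ (ad ℂ L h).maxGenEigenspace μ) :
    ad ℂ L f z ∈ (ad ℂ L h).maxGenEigenspace (μ - 2) := by
  have h1 := LieModule.lie_mem_maxGenEigenspace_toEnd (f_mem hT) hz
  rw [show (-2 : ℂ) + μ = μ - 2 by ring] at h1
  exact h1

omit hT in
lemma cas_apply (w : L) : Cas e h f w =
    ⁅e, ⁅f, w⁆⁆ + ⁅e, ⁅f, w⁆⁆ + ⁅f, ⁅e, w⁆⁆ + ⁅f, ⁅e, w⁆⁆ + ⁅h, ⁅h, w⁆⁆ := by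
  simp [Cas, Module.End.mul_apply]

lemma cas_eq_top {w : L} {μ : ℂ} (hhw : ⁅h, w⁆ = μ • w) (hew : ⁅e, w⁆ = 0) :
    Cas e h f w = (μ^2 + 2*μ) • w := by
  have h1 : ⁅e, ⁅f, w⁆⁆ = μ • w := by
    rw [leibniz_lie, hT.lie_e_f, hhw, hew, lie_zero, add_zero]
  rw [cas_apply, h1, hew, lie_zero, hhw, lie_smul, hhw]
  module

lemma cas_eq_bot {w : L} {μ : ℂ} (hhw : ⁅h, w⁆ = μ • w) (hfw : ⁅f, w⁆ = 0) :
    Cas e h f w = (μ^2 - 2*μ) • w := by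
  have h1 : ⁅f, ⁅e, w⁆⁆ = -(μ • w) := by
    rw [leibniz_lie]
    have h2 : ⁅f, e⁆ = -h := by rw [← lie_skew, hT.lie_e_f]
    rw [h2, hfw, lie_zero, add_zero, neg_lie, hhw]
  rw [cas_apply, h1, hfw, lie_zero, hhw, lie_smul, hhw]
  module

omit hT in
lemma chi_eq {w : L} (hw : w ≠ 0) {g : Module.End ℂ L} {χ c : ℂ}
    (hmem : w ∈ g.maxGenEigenspace χ) (heig : g w = c • w) : χ = c := by
  by_contra hne
  have h2 : w ∈ g.maxGenEigenspace c := by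
    rw [Module.End.mem_maxGenEigenspace]
    exact ⟨1, by simp [heig]⟩
  exact hw (by simpa using (Module.End.disjoint_genEigenspace g hne ⊤ ⊤).le_bot ⟨hmem, h2⟩)

omit hT in
lemma nat_quad {n m : ℕ} (hnm : ((n:ℂ)^2 + 2*n = (m:ℂ)^2 + 2*m)) : n = m := by
  have h2 : ((n:ℂ) - m) * ((n:ℂ) + m + 2) = 0 := by linear_combination hnm
  rcases mul_eq_zero.mp h2 with h3 | h3
  · exact_mod_cast sub_eq_zero.mp h3
  · exfalso
    have h4 : ((n + m + 2 : ℕ) : ℂ) = 0 := by push_cast; linear_combination h3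
    rw [Nat.cast_eq_zero] at h4
    omega

lemma mu_nat {w : L} {μ : ℂ} (hw : w ≠ 0) (hhw : ⁅h, w⁆ = μ • w) (hew : ⁅e, w⁆ = 0) :
    ∃ n : ℕ, μ = n :=
  IsSl2Triple.HasPrimitiveVectorWith.exists_nat (t := hT) ⟨hw, hhw, hew⟩

lemma mu_neg_nat {w : L} {μ : ℂ} (hw : w ≠ 0) (hhw : ⁅h, w⁆ = μ • w) (hfw : ⁅f, w⁆ = 0) :
    ∃ n : ℕ, μ = -(n:ℂ) := by
  have hh : ⁅-h, w⁆ = (-μ) • w := by rw [neg_lie, hhw, neg_smul]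
  obtain ⟨n, hn⟩ := IsSl2Triple.HasPrimitiveVectorWith.exists_nat (t := hT.symm) ⟨hw, hh, hfw⟩
  exact ⟨n, by linear_combination -hn⟩

lemma mapsH_U {μ χ : ℂ} : ∀ z ∈ ((ad ℂ L h).maxGenEigenspace μ ⊓
      (Cas e h f).maxGenEigenspace χ),
    (ad ℂ L h) z ∈ ((ad ℂ L h).maxGenEigenspace μ ⊓ (Cas e h f).maxGenEigenspace χ) :=
  fun z hz => ⟨Module.End.mapsTo_maxGenEigenspace_of_comm (Commute.refl _) μ hz.1,
    Module.End.mapsTo_maxGenEigenspace_of_comm (commHC hT).symm χ hz.2⟩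

lemma mapsC_U {μ χ : ℂ} : ∀ z ∈ ((ad ℂ L h).maxGenEigenspace μ ⊓
      (Cas e h f).maxGenEigenspace χ),
    (Cas e h f) z ∈ ((ad ℂ L h).maxGenEigenspace μ ⊓ (Cas e h f).maxGenEigenspace χ) :=
  fun z hz => ⟨Module.End.mapsTo_maxGenEigenspace_of_comm (commHC hT) μ hz.1,
    Module.End.mapsTo_maxGenEigenspace_of_comm (Commute.refl _) χ hz.2⟩

lemma chain_up : ∀ N : ℕ, ∀ μ χ : ℂ,
    ((ad ℂ L h).maxGenEigenspace μ ⊓ (Cas e h f).maxGenEigenspace χ ≠ ⊥) →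
    highDim h μ ≤ N → ∃ n k : ℕ, χ = (n:ℂ)^2 + 2*n ∧ μ = (n:ℂ) - 2*k := by
  intro N
  induction N using Nat.strongRecOn with
  | ind N ih =>
  intro μ χ hU hN
  by_cases h2 : (ad ℂ L h).maxGenEigenspace (μ+2) ⊓ (Cas e h f).maxGenEigenspace χ = ⊥
  · obtain ⟨w, hwU, hw0, hweig⟩ := exists_eigvec hU (mapsH_U hT) inf_le_left
    have hew : ⁅e, w⁆ = 0 := by
      have hmem : (ad ℂ L e) w ∈ (ad ℂ L h).maxGenEigenspace (μ+2) ⊓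
          (Cas e h f).maxGenEigenspace χ :=
        ⟨mapsA hT hwU.1, Module.End.mapsTo_maxGenEigenspace_of_comm (commCA hT) χ hwU.2⟩
      rw [h2] at hmem
      simpa using hmem
    have hhw : ⁅h, w⁆ = μ • w := hweig
    obtain ⟨n, hn⟩ := mu_nat hT hw0 hhw hew
    have hχ : χ = μ^2 + 2*μ := chi_eq hw0 hwU.2 (cas_eq_top hT hhw hew)
    exact ⟨n, 0, by rw [hχ, hn], by rw [hn]; push_cast; ring⟩
  · have hEne : (ad ℂ L h).maxGenEigenspace (μ+2) ≠ ⊥ := by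
      intro hb
      exact h2 (by rw [hb, bot_inf_eq])
    have hre : μ.re < (μ+2).re := by simp [Complex.add_re]
    have hlt : highDim h (μ+2) < highDim h μ := highDim_lt h hEne hre
    obtain ⟨n, k, hχ, hμ⟩ := ih (highDim h (μ+2)) (lt_of_lt_of_le hlt hN) (μ+2) χ h2 le_rfl
    exact ⟨n, k+1, hχ, by push_cast; linear_combination hμ⟩

lemma chain_down : ∀ N : ℕ, ∀ μ χ : ℂ,
    ((ad ℂ L h).maxGenEigenspace μ ⊓ (Cas e h f).maxGenEigenspace χ ≠ ⊥) →
    lowDim h μ ≤ N → ∃ n j : ℕ, χ = (n:ℂ)^2 + 2*n ∧ μ = -(n:ℂ) + 2*j := by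
  intro N
  induction N using Nat.strongRecOn with
  | ind N ih =>
  intro μ χ hU hN
  by_cases h2 : (ad ℂ L h).maxGenEigenspace (μ-2) ⊓ (Cas e h f).maxGenEigenspace χ = ⊥
  · obtain ⟨w, hwU, hw0, hweig⟩ := exists_eigvec hU (mapsH_U hT) inf_le_left
    have hfw : ⁅f, w⁆ = 0 := by
      have hmem : (ad ℂ L f) w ∈ (ad ℂ L h).maxGenEigenspace (μ-2) ⊓
          (Cas e h f).maxGenEigenspace χ :=
        ⟨mapsB hT hwU.1, Module.End.mapsTo_maxGenEigenspace_of_comm (commCB hT) χ hwU.2⟩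
      rw [h2] at hmem
      simpa using hmem
    have hhw : ⁅h, w⁆ = μ • w := hweig
    obtain ⟨n, hn⟩ := mu_neg_nat hT hw0 hhw hfw
    have hχ : χ = μ^2 - 2*μ := chi_eq hw0 hwU.2 (cas_eq_bot hT hhw hfw)
    exact ⟨n, 0, by rw [hχ, hn]; push_cast; ring, by rw [hn]; push_cast; ring⟩
  · have hEne : (ad ℂ L h).maxGenEigenspace (μ-2) ≠ ⊥ := by
      intro hb
      exact h2 (by rw [hb, bot_inf_eq])
    have hre : (μ-2).re < μ.re := by simp [Complex.sub_re]
    have hlt : lowDim h (μ-2) < lowDim h μ := lowDim_lt h hEne hre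
    obtain ⟨n, j, hχ, hμ⟩ := ih (lowDim h (μ-2)) (lt_of_lt_of_le hlt hN) (μ-2) χ h2 le_rfl
    exact ⟨n, j+1, hχ, by push_cast; linear_combination hμ⟩

lemma per_pair (μ χ : ℂ) :
    (ad ℂ L h).maxGenEigenspace μ ⊓ (Cas e h f).maxGenEigenspace χ ≤
      Submodule.map (ad ℂ L e : Module.End ℂ L) ((ad ℂ L h).maxGenEigenspace (μ-2)) ⊔
      (LinearMap.ker (ad ℂ L f : Module.End ℂ L) ⊓ (ad ℂ L h).maxGenEigenspace μ) := by
  set A := (ad ℂ L e : Module.End ℂ L) with hA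
  set B := (ad ℂ L f : Module.End ℂ L) with hB
  set Hd := (ad ℂ L h : Module.End ℂ L) with hHd
  set C := Cas e h f with hC
  set U := Hd.maxGenEigenspace μ ⊓ C.maxGenEigenspace χ with hUdef
  by_cases hU : U = ⊥
  · exact hU ▸ bot_le
  obtain ⟨n, k, hχn, hμn⟩ := chain_up hT (highDim h μ) μ χ hU le_rfl
  by_cases ha : χ - μ^2 + 2*μ = 0
  · -- exceptional case: `U ⊆ ker B`
    have hμ_eq : μ = -(n:ℂ) := by
      have hfac : (μ - ((n:ℂ)+2)) * (μ + n) = 0 := by linear_combination hχn - ha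
      rcases mul_eq_zero.mp hfac with h3 | h3
      · exfalso
        have h4 : ((2 + 2*k : ℕ) : ℂ) = 0 := by
          push_cast
          linear_combination hμn - (sub_eq_zero.mp h3)
        rw [Nat.cast_eq_zero] at h4
        omega
      · linear_combination h3
    intro z hz
    have hBz : B z ∈ Hd.maxGenEigenspace (μ-2) ⊓ C.maxGenEigenspace χ :=
      ⟨mapsB hT hz.1, Module.End.mapsTo_maxGenEigenspace_of_comm (commCB hT) χ hz.2⟩
    have hbot : Hd.maxGenEigenspace (μ-2) ⊓ C.maxGenEigenspace χ = ⊥ := by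
      by_contra hne
      obtain ⟨n', j, hχ', hμ'⟩ := chain_down hT (lowDim h (μ-2)) (μ-2) χ hne le_rfl
      have hnn' : n' = n := nat_quad (by rw [← hχ', ← hχn])
      rw [hnn', hμ_eq] at hμ'
      have h5 : ((2 + 2*j : ℕ) : ℂ) = 0 := by push_cast; linear_combination -hμ'
      rw [Nat.cast_eq_zero] at h5
      omega
    rw [hbot] at hBz
    exact Submodule.mem_sup_right ⟨by simpa using hBz, hz.1⟩
  · -- main case: `U ⊆ A (EigH (μ-2))`
    intro z hz
    set N1 := C - χ • (1 : Module.End ℂ L) with hN1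
    set N2 := (Hd + (μ-2) • (1 : Module.End ℂ L)) * (Hd - μ • (1 : Module.End ℂ L)) with hN2
    set P := C - Hd * Hd + Hd + Hd with hP
    set a := χ - μ^2 + 2*μ with ha'
    have hPz : ∀ u : L, P u = a • u + (N1 - N2) u := by
      intro u
      simp only [hP, hN1, hN2, LinearMap.sub_apply, LinearMap.add_apply, Module.End.mul_apply,
        LinearMap.smul_apply, Module.End.one_apply, map_sub, map_add, map_smul, ha']
      module
    have hHU : ∀ u ∈ U, Hd u ∈ U := mapsH_U hT
    have hCU : ∀ u ∈ U, C u ∈ U := mapsC_U hT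
    have hN2U : ∀ u ∈ U, N2 u ∈ U := by
      intro u hu
      have expand : N2 u = Hd (Hd u) - μ • Hd u + ((μ-2) • Hd u - ((μ-2) * μ) • u) := by
        simp only [hN2, Module.End.mul_apply, LinearMap.sub_apply, LinearMap.add_apply,
          LinearMap.smul_apply, Module.End.one_apply, map_sub, map_smul]
        module
      rw [expand]
      exact U.add_mem (U.sub_mem (hHU _ (hHU _ hu)) (U.smul_mem _ (hHU _ hu)))
        (U.sub_mem (U.smul_mem _ (hHU _ hu)) (U.smul_mem _ hu))
    have hNU : ∀ u ∈ U, (N1 - N2) u ∈ U := by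
      intro u hu
      rw [LinearMap.sub_apply]
      refine U.sub_mem ?_ (hN2U u hu)
      rw [hN1, LinearMap.sub_apply, LinearMap.smul_apply, Module.End.one_apply]
      exact U.sub_mem (hCU u hu) (U.smul_mem _ hu)
    have hCHd : Commute C Hd := (commHC hT).symm
    have c1 : Commute C (Hd - μ • 1) :=
      hCHd.sub_right ((Commute.one_right C).smul_right μ)
    have c2 : Commute C (Hd + (μ-2) • 1) :=
      hCHd.add_right ((Commute.one_right C).smul_right (μ-2))
    have cN1N2 : Commute N1 N2 :=
      ((c2.mul_right c1).sub_left ((Commute.one_left N2).smul_left χ))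
    set K1 := Module.End.maxGenEigenspaceIndex C χ with hK1
    set K2 := Module.End.maxGenEigenspaceIndex Hd μ with hK2
    have hmax1 : C.maxGenEigenspace χ = LinearMap.ker ((C - χ • 1) ^ K1) := by
      rw [Module.End.maxGenEigenspace_eq, Module.End.genEigenspace_nat]
    have hmax2 : Hd.maxGenEigenspace μ = LinearMap.ker ((Hd - μ • 1) ^ K2) := by
      rw [Module.End.maxGenEigenspace_eq, Module.End.genEigenspace_nat]
    have hN1nil : ∀ u ∈ U, (N1 ^ K1) u = 0 := by
      intro u hu
      have h2 := hu.2
      rw [hmax1] at h2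
      exact h2
    have hN2nil : ∀ u ∈ U, (N2 ^ K2) u = 0 := by
      intro u hu
      have h2 := hu.1
      rw [hmax2] at h2
      have h1 : ((Hd - μ • 1) ^ K2) u = 0 := h2
      have hcm : Commute (Hd + (μ-2) • (1 : Module.End ℂ L)) (Hd - μ • 1) :=
        (((Commute.refl Hd).sub_right ((Commute.one_right Hd).smul_right μ)).add_left
          ((((Commute.one_left Hd).sub_right
            ((Commute.refl (1 : Module.End ℂ L)).smul_right μ)).smul_left (μ-2))))
      rw [hN2, hcm.mul_pow, Module.End.mul_apply, h1, map_zero]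
    have hnil : ∀ u ∈ U, ((N1 - N2) ^ (K1 + K2)) u = 0 :=
      pointwise_nilp cN1N2 hN2U hN1nil hN2nil
    obtain ⟨u, hu, hPu⟩ := surj_of_nilp ha hPz hNU (K1 + K2) z hz (hnil z hz)
    have hform : P u = A (B u + B u + B u + B u) := by
      have h4 : A * B + A * B + A * B + A * B = P := by
        rw [hP, hC, hA, hB, hHd]; exact fourAB hT
      rw [← h4]
      simp [Module.End.mul_apply, LinearMap.add_apply, map_add]
    apply Submodule.mem_sup_left
    refine ⟨B u + B u + B u + B u, ?_, by rw [← hform, hPu]⟩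
    have hBu : B u ∈ Hd.maxGenEigenspace (μ-2) := mapsB hT hu.1
    exact Submodule.add_mem _ (Submodule.add_mem _ (Submodule.add_mem _ hBu hBu) hBu) hBu

lemma per_mu (μ : ℂ) :
    (ad ℂ L h).maxGenEigenspace μ ≤
      Submodule.map (ad ℂ L e : Module.End ℂ L) ((ad ℂ L h).maxGenEigenspace (μ-2)) ⊔
      (LinearMap.ker (ad ℂ L f : Module.End ℂ L) ⊓ (ad ℂ L h).maxGenEigenspace μ) := by
  have hmaps : ∀ z ∈ (ad ℂ L h).maxGenEigenspace μ,
      (Cas e h f) z ∈ (ad ℂ L h).maxGenEigenspace μ :=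
    fun z hz => Module.End.mapsTo_maxGenEigenspace_of_comm (commHC hT) μ hz
  have hdecomp : (ad ℂ L h).maxGenEigenspace μ =
      ⨆ χ : ℂ, (ad ℂ L h).maxGenEigenspace μ ⊓ (Cas e h f).maxGenEigenspace χ :=
    Submodule.eq_iSup_inf_genEigenspace ⊤ hmaps
      (Module.End.iSup_maxGenEigenspace_eq_top _)
  conv_lhs => rw [hdecomp]
  exact iSup_le fun χ => per_pair hT μ χ

lemma lie_f_lie_h (z : L) (hz : ⁅f, z⁆ = 0) : ⁅f, ⁅h, z⁆⁆ = 0 := by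
  have h2 : ⁅f, h⁆ = 2 • f := by rw [← lie_skew, hT.lie_h_f_nsmul, neg_neg]
  rw [leibniz_lie, hz, lie_zero, add_zero, h2, nsmul_lie, hz, smul_zero]

lemma kerB_decomp :
    LinearMap.ker (ad ℂ L f : Module.End ℂ L) =
      ⨆ ν : ℂ, LinearMap.ker (ad ℂ L f : Module.End ℂ L) ⊓ (ad ℂ L h).maxGenEigenspace ν := by
  apply Submodule.eq_iSup_inf_genEigenspace ⊤ _ (Module.End.iSup_maxGenEigenspace_eq_top _)
  intro z hz
  rw [LinearMap.mem_ker] at hz ⊢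
  exact lie_f_lie_h hT z hz

lemma kerB_piece {ν : ℂ}
    (hne : LinearMap.ker (ad ℂ L f : Module.End ℂ L) ⊓ (ad ℂ L h).maxGenEigenspace ν ≠ ⊥) :
    ∃ n : ℕ, ν = -(n:ℂ) := by
  have hmaps : ∀ z ∈ LinearMap.ker (ad ℂ L f : Module.End ℂ L) ⊓
        (ad ℂ L h).maxGenEigenspace ν,
      (ad ℂ L h) z ∈ LinearMap.ker (ad ℂ L f : Module.End ℂ L) ⊓
        (ad ℂ L h).maxGenEigenspace ν := by
    intro z hz
    exact ⟨LinearMap.mem_ker.mpr (lie_f_lie_h hT z hz.1),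
      Module.End.mapsTo_maxGenEigenspace_of_comm (Commute.refl _) ν hz.2⟩
  obtain ⟨w, hwp, hw0, hweig⟩ := exists_eigvec hne hmaps inf_le_right
  exact mu_neg_nat hT hw0 hweig hwp.1

end Triple

end SlodowyTransversal
namespace SlodowyTransversal


variable {L : Type*} [LieRing L] [LieAlgebra ℂ L] [FiniteDimensional ℂ L]
variable {e h f : L}

lemma master (hT : IsSl2Triple h e f) {x : L}
    (hx : x - e ∈ LinearMap.ker (LieAlgebra.ad ℂ L f)) :
    ∀ N : ℕ, ∀ μ : ℂ, lowDim h μ ≤ N →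
      (ad ℂ L h).maxGenEigenspace μ ≤
        LinearMap.range (LieAlgebra.ad ℂ L x) ⊔ LinearMap.ker (LieAlgebra.ad ℂ L f) := by
  intro N
  induction N using Nat.strongRecOn with
  | ind N ih =>
  intro μ hN z hz
  obtain ⟨p, hp, q, hq, hpq⟩ := Submodule.mem_sup.mp (per_mu hT μ hz)
  obtain ⟨y, hy, rfl⟩ := Submodule.mem_map.mp hp
  have hqW : q ∈ LinearMap.range (LieAlgebra.ad ℂ L x) ⊔ LinearMap.ker (LieAlgebra.ad ℂ L f) :=
    Submodule.mem_sup_right hq.1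
  have hvW : ⁅x - e, y⁆ ∈
      LinearMap.range (LieAlgebra.ad ℂ L x) ⊔ LinearMap.ker (LieAlgebra.ad ℂ L f) := by
    have hvmem : x - e ∈ ⨆ ν : ℂ, LinearMap.ker (ad ℂ L f : Module.End ℂ L) ⊓
        (ad ℂ L h).maxGenEigenspace ν := by
      rw [← kerB_decomp hT]; exact hx
    refine Submodule.iSup_induction _
      (motive := fun v => ⁅v, y⁆ ∈
        LinearMap.range (LieAlgebra.ad ℂ L x) ⊔ LinearMap.ker (LieAlgebra.ad ℂ L f))
      hvmem ?_ ?_ ?_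
    · intro ν v hv
      show ⁅v, y⁆ ∈ _
      by_cases hv0 : v = 0
      · rw [hv0, zero_lie]; exact Submodule.zero_mem _
      have hne : LinearMap.ker (ad ℂ L f : Module.End ℂ L) ⊓
          (ad ℂ L h).maxGenEigenspace ν ≠ ⊥ := by
        intro hb
        rw [hb] at hv
        exact hv0 (by simpa using hv)
      obtain ⟨n, rfl⟩ := kerB_piece hT hne
      have hbr : ⁅v, y⁆ ∈ (ad ℂ L h).maxGenEigenspace (-(n:ℂ) + (μ - 2)) :=
        LieModule.lie_mem_maxGenEigenspace_toEnd hv.2 hy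
      by_cases hEb : (ad ℂ L h).maxGenEigenspace (-(n:ℂ) + (μ - 2)) = ⊥
      · rw [hEb] at hbr
        have : ⁅v, y⁆ = 0 := by simpa using hbr
        rw [this]; exact Submodule.zero_mem _
      · have hre : (-(n:ℂ) + (μ - 2)).re < μ.re := by
          have : (0:ℝ) ≤ (n:ℝ) := Nat.cast_nonneg n
          simp only [Complex.add_re, Complex.sub_re, Complex.neg_re, Complex.natCast_re,
            Complex.ofReal_re]
          norm_num
          linarith
        have hlt := lowDim_lt h hEb hre
        exact ih (lowDim h (-(n:ℂ) + (μ - 2))) (lt_of_lt_of_le hlt hN) _ le_rfl hbr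
    · show ⁅(0:L), y⁆ ∈ _
      rw [zero_lie]; exact Submodule.zero_mem _
    · intro v w hv hw
      show ⁅v + w, y⁆ ∈ _
      rw [add_lie]; exact Submodule.add_mem _ hv hw
  have hxy : ⁅x, y⁆ ∈
      LinearMap.range (LieAlgebra.ad ℂ L x) ⊔ LinearMap.ker (LieAlgebra.ad ℂ L f) :=
    Submodule.mem_sup_left ⟨y, rfl⟩
  have hey : (ad ℂ L e) y = ⁅x, y⁆ - ⁅x - e, y⁆ := by
    rw [sub_lie]
    simp
  rw [← hpq, hey]
  exact Submodule.add_mem _ (Submodule.sub_mem _ hxy hvW) hqW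

end SlodowyTransversal

/-- The Slodowy slice `e + Ker (ad f)` meets every adjoint orbit
transversally: for every `x ∈ e + Ker (ad f)`, `𝔤 = [𝔤, x] + Ker (ad f)`. -/
theorem slice_transversal
    {L : Type*} [LieRing L] [LieAlgebra ℂ L] [FiniteDimensional ℂ L]
    [LieAlgebra.IsSemisimple ℂ L]
    (e h f : L) (hT : IsSl2Triple h e f) :
    ∀ x : L, x - e ∈ LinearMap.ker (LieAlgebra.ad ℂ L f) →
      LinearMap.range (LieAlgebra.ad ℂ L x) ⊔ LinearMap.ker (LieAlgebra.ad ℂ L f) = ⊤ := by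
  intro x hx
  rw [eq_top_iff]
  calc (⊤ : Submodule ℂ L) = ⨆ μ : ℂ, (LieAlgebra.ad ℂ L h).maxGenEigenspace μ :=
        (Module.End.iSup_maxGenEigenspace_eq_top _).symm
  _ ≤ _ := iSup_le fun μ => SlodowyTransversal.master hT hx (SlodowyTransversal.lowDim h μ) μ le_rfl
end
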